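/- arXiv:1907.06862 — 14 statements merged into one kernel-verified Lean document; each statement's English description precedes it below -/
import Mathlib

section
/- For all natural numbers x and y, x*(y - x) + x*y + x + y ≤ (8/3)*y^2 + (1/3)*x^2 (equivalently, 3*(x*(y-x) + x*y + x + y) ≤ 8*y^2 + x^2, interpreting x*(y-x) as x*y - x^2 over the integers). -/
theorem stmt_0 (x y : ℤ) (hx : 0 ≤ x) (hy : 0 ≤ y) :
    3 * (2 * x * y + x + y) ≤ 8 * y ^ 2 + 4 * x ^ 2 := by
  rcases eq_or_lt_of_le hx with h | h
  · nlinarith [mul_nonneg hy hy]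
  · rcases eq_or_lt_of_le hy with h2 | h2
    · nlinarith
    · have h1 : 1 ≤ x := h
      have h3 : 1 ≤ y := h2
      nlinarith [sq_nonneg (x - y), sq_nonneg (x - 2*y), mul_nonneg (sub_nonneg.2 h1) (sub_nonneg.2 h3), sq_nonneg (x - y - 1), mul_nonneg hx hy]
end

section
/- For all nonnegative integers x and y, 2*x*y + x + y ≤ (8/3)*y^2 + (4/3)*x^2, i.e., 6*x*y + 3*x + 3*y ≤ 8*y^2 + 4*x^2. -/
theorem stmt_1 (x y : ℕ) :
    6 * x * y + 3 * x + 3 * y ≤ 8 * y ^ 2 + 4 * x ^ 2 := by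
  rcases Nat.eq_zero_or_pos x with hx | hx
  · subst hx
    rcases Nat.eq_zero_or_pos y with hy | hy
    · simp [hy]
    · nlinarith
  · rcases Nat.eq_zero_or_pos y with hy | hy
    · subst hy; nlinarith
    · zify at *
      nlinarith [sq_nonneg (2*(x:ℤ) - 3*y), sq_nonneg ((x:ℤ) - y), sq_nonneg (2*(x:ℤ) - 2*y)]
end

section
/- Smoothness implies a bound on the Price of Tribalism: if a finite cost-minimisation game G with tribal extension G^τ is (λ, μ, τ)-smooth with μ < 1, then for every pure Nash equilibrium s of G^τ and every strategy profile s*, the social cost satisfies C(s) ≤ (λ/(1-μ)) · C(s*). -/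
open Finset

/-- Smoothness implies the Price of Tribalism bound λ/(1-μ). -/
theorem stmt_2 {ι : Type*} [Fintype ι] [DecidableEq ι]
    {St : ι → Type*} (c : ∀ i, (∀ j, St j) → ℝ)
    (hc : ∀ i s, 0 ≤ c i s)
    (τ : ι → ℕ) (lam mu : ℝ) (hmu : mu < 1)
    -- tribal costs
    (cτ : ∀ i, (∀ j, St j) → ℝ)
    (hcτ : ∀ i s, cτ i s = ∑ j ∈ univ.filter (fun j => τ j = τ i), c j s)
    -- social cost
    (C : (∀ j, St j) → ℝ) (hC : ∀ s, C s = ∑ i, c i s)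
    -- (λ, μ, τ)-smoothness
    (hsmooth : ∀ s s' : ∀ j, St j,
      ∑ i, (cτ i (Function.update s i (s' i)) - (cτ i s - c i s)) ≤ lam * C s' + mu * C s)
    -- s is a pure Nash equilibrium of the tribal extension
    (s : ∀ j, St j)
    (hnash : ∀ (i : ι) (s' : ∀ j, St j), cτ i s ≤ cτ i (Function.update s i (s' i)))
    (sstar : ∀ j, St j) :
    C s ≤ (lam / (1 - mu)) * C sstar := by
  have h1 : C s ≤ ∑ i, (cτ i (Function.update s i (sstar i)) - (cτ i s - c i s)) := by
    rw [hC]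
    apply Finset.sum_le_sum
    intro i _
    have := hnash i sstar
    linarith
  have h2 := hsmooth s sstar
  have hpos : (0:ℝ) < 1 - mu := by linarith
  rw [div_mul_eq_mul_div, le_div_iff₀ hpos]
  nlinarith
end

section
/- In any tribal Nash equilibrium of the social k-grouping game (players choose among k cliques, arbitrary tribal partition), the social welfare satisfies (2k−1)·U(s) ≥ Σ_i Σ_j u_{ji}, i.e., the Price of Tribalism is at most 2k−1. -/
open Finset

/-- In any tribal Nash equilibrium of the social k-grouping game,
(2k−1)·U(s) ≥ Σ_i Σ_j u_{ji}: the Price of Tribalism is at most 2k−1. -/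
theorem stmt_4 {P : Type*} [Fintype P] [DecidableEq P] (k : ℕ) (hk : 1 ≤ k)
    (u : P → P → ℝ) (hu : ∀ i j, 0 ≤ u i j) (hdiag : ∀ i, u i i = 0)
    (τ : P → ℕ) (s : P → Fin k)
    (ui : (P → Fin k) → P → ℝ)
    (hui : ∀ t i, ui t i = ∑ j ∈ univ.filter (fun j => t j = t i), u j i)
    (U : (P → Fin k) → ℝ) (hU : ∀ t, U t = ∑ i, ui t i)
    (uτ : (P → Fin k) → P → ℝ)
    (huτ : ∀ t i, uτ t i = ∑ j ∈ univ.filter (fun j => τ j = τ i), ui t j)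
    -- tribal Nash: no player can increase their tribal utility by changing clique
    (hnash : ∀ (i : P) (c : Fin k), uτ (Function.update s i c) i ≤ uτ s i) :
    (2 * (k : ℝ) - 1) * U s ≥ ∑ i, ∑ j, u j i := by
  classical
  set A : P → ℝ := fun i => ∑ j, if s j = s i then u j i else 0 with hA
  set B : P → ℝ := fun i => ∑ j, if s j = s i then u i j else 0 with hB
  set C : P → Fin k → ℝ := fun i c => ∑ l, if s l = c then u l i else 0 with hC
  have hui' : ∀ t i, ui t i = ∑ j, if t j = t i then u j i else 0 := by
    intro t i; rw [hui]; simp [Finset.sum_filter]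
  have huτ' : ∀ t i, uτ t i = ∑ j, if τ j = τ i then ui t j else 0 := by
    intro t i; rw [huτ]; simp [Finset.sum_filter]
  -- key inequality: incoming weight from any clique c is at most A i + B i
  have key : ∀ i c, C i c ≤ A i + B i := by
    intro i c
    set t := Function.update s i c with ht
    have hnz := hnash i c
    -- compute the difference of tribal utilities
    have hdiffsum : uτ s i - uτ t i =
        ∑ j, ((if τ j = τ i then ui s j else 0) - (if τ j = τ i then ui t j else 0)) := by
      rw [huτ' s i, huτ' t i, Finset.sum_sub_distrib]
    have hterm : ∀ j, ((if τ j = τ i then ui s j else 0) - (if τ j = τ i then ui t j else 0))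
        ≤ (if j = i then A i - C i c else 0)
          + (if j ≠ i ∧ τ j = τ i ∧ s j = s i then u i j else 0) := by
      intro j
      by_cases hj : j = i
      · subst hj
        have h1 : ui s j = A j := by rw [hui' s j]
        have h2 : ui t j = C j c := by
          rw [hui' t j]
          apply Finset.sum_congr rfl
          intro l _
          by_cases hl : l = j
          · subst hl
            simp [ht, Function.update, hdiag]
          · simp [ht, Function.update, hl]
        simp [h1, h2]
      · -- j ≠ i
        have htj : t j = s j := by simp [ht, Function.update, hj]
        have h3 : ui s j - ui t j =
            (if s i = s j then u i j else 0) - (if c = s j then u i j else 0) := by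
          rw [hui' s j, hui' t j, htj, ← Finset.sum_sub_distrib]
          rw [Finset.sum_eq_single i]
          · simp [ht, Function.update]
          · intro l _ hl
            simp [ht, Function.update, hl]
          · simp
        by_cases hτ : τ j = τ i
        · rw [if_pos hτ, if_pos hτ, if_neg hj]
          have hc : (0:ℝ) ≤ if c = s j then u i j else 0 := by
            split_ifs with h
            · exact hu i j
            · exact le_refl 0
          have hx : (if s i = s j then u i j else 0)
              ≤ (if j ≠ i ∧ τ j = τ i ∧ s j = s i then u i j else 0) := by
            by_cases h4 : s i = s j
            · rw [if_pos h4, if_pos ⟨hj, hτ, h4.symm⟩]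
            · rw [if_neg h4]
              split_ifs with h5
              · exact hu i j
              · exact le_refl 0
          linarith [h3]
        · rw [if_neg hτ, if_neg hτ]
          have : ¬(j ≠ i ∧ τ j = τ i ∧ s j = s i) := fun h => hτ h.2.1
          rw [if_neg hj, if_neg this]
          simp
    have hsum : uτ s i - uτ t i ≤ (A i - C i c) +
        ∑ j, (if j ≠ i ∧ τ j = τ i ∧ s j = s i then u i j else 0) := by
      rw [hdiffsum]
      calc ∑ j, ((if τ j = τ i then ui s j else 0) - (if τ j = τ i then ui t j else 0))
          ≤ ∑ j, ((if j = i then A i - C i c else 0)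
            + (if j ≠ i ∧ τ j = τ i ∧ s j = s i then u i j else 0)) :=
            Finset.sum_le_sum (fun j _ => hterm j)
        _ = (A i - C i c) + ∑ j, (if j ≠ i ∧ τ j = τ i ∧ s j = s i then u i j else 0) := by
            rw [Finset.sum_add_distrib, Finset.sum_ite_eq' univ i (fun _ => A i - C i c)]
            simp
    have hBbound : ∑ j, (if j ≠ i ∧ τ j = τ i ∧ s j = s i then u i j else 0) ≤ B i := by
      apply Finset.sum_le_sum
      intro j _
      split_ifs with h1 h2
      · exact le_refl _
      · exact absurd h1.2.2 h2
      · exact hu i j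
      · exact le_refl _
    have h0 : 0 ≤ uτ s i - uτ t i := by linarith [hnz]
    linarith
  -- per-player bound
  have perplayer : ∀ i, ∑ l, u l i ≤ A i + ((k - 1 : ℕ) : ℝ) * (A i + B i) := by
    intro i
    have hsplit : ∑ l, u l i = ∑ c, C i c := by
      rw [Finset.sum_comm]
      apply Finset.sum_congr rfl
      intro l _
      rw [Finset.sum_ite_eq univ (s l) (fun _ => u l i)]
      simp
    have hcsi : C i (s i) = A i := rfl
    have herase : ∑ c ∈ univ.erase (s i), C i c ≤ ((k - 1 : ℕ) : ℝ) * (A i + B i) := by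
      have hcard : (univ.erase (s i)).card = k - 1 := by
        rw [Finset.card_erase_of_mem (Finset.mem_univ _)]
        simp
      calc ∑ c ∈ univ.erase (s i), C i c
          ≤ ∑ _c ∈ univ.erase (s i), (A i + B i) :=
            Finset.sum_le_sum (fun c _ => key i c)
        _ = ((k - 1 : ℕ) : ℝ) * (A i + B i) := by
            rw [Finset.sum_const, hcard, nsmul_eq_mul]
    calc ∑ l, u l i = ∑ c, C i c := hsplit
      _ = C i (s i) + ∑ c ∈ univ.erase (s i), C i c :=
          (Finset.add_sum_erase univ (C i) (Finset.mem_univ (s i))).symm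
      _ ≤ A i + ((k - 1 : ℕ) : ℝ) * (A i + B i) := by
          rw [hcsi]; linarith
  have hUA : U s = ∑ i, A i := by
    rw [hU]
    exact Finset.sum_congr rfl (fun i _ => hui' s i)
  have hUB : ∑ i, B i = U s := by
    rw [hUA, hA, hB]
    rw [Finset.sum_comm (f := fun i j => if s j = s i then u i j else 0)]
    apply Finset.sum_congr rfl
    intro j _
    apply Finset.sum_congr rfl
    intro i _
    simp [eq_comm]
  have hfinal : ∑ i, ∑ l, u l i ≤ ∑ i, (A i + ((k - 1 : ℕ) : ℝ) * (A i + B i)) :=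
    Finset.sum_le_sum (fun i _ => perplayer i)
  have hexp : ∑ i, (A i + ((k - 1 : ℕ) : ℝ) * (A i + B i))
      = (∑ i, A i) + ((k - 1 : ℕ) : ℝ) * ((∑ i, A i) + (∑ i, B i)) := by
    rw [Finset.sum_add_distrib, ← Finset.mul_sum, Finset.sum_add_distrib]
  have hcast : ((k - 1 : ℕ) : ℝ) = (k : ℝ) - 1 := by
    rw [Nat.cast_sub hk, Nat.cast_one]
  rw [ge_iff_le]
  calc ∑ i, ∑ j, u j i ≤ (∑ i, A i) + ((k - 1 : ℕ) : ℝ) * ((∑ i, A i) + (∑ i, B i)) := by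
        rw [← hexp]; exact hfinal
    _ = (2 * (k : ℝ) - 1) * U s := by
        rw [hcast, hUB, ← hUA]; ring
end

section
/- In any pure Nash equilibrium of the (selfish) social k-grouping game, the social welfare is at least 1/k of the optimum: k·U(s) ≥ Σ_i Σ_j u_{ji}. -/
open Finset

/-- In any pure Nash equilibrium of the selfish social k-grouping game,
k·U(s) ≥ Σ_i Σ_j u_{ji}. -/
theorem stmt_6 {P : Type*} [Fintype P] [DecidableEq P] (k : ℕ) (hk : 1 ≤ k)
    (u : P → P → ℝ) (hu : ∀ i j, 0 ≤ u i j) (hdiag : ∀ i, u i i = 0)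
    (s : P → Fin k)
    -- pure Nash: the current clique is at least as good as any other clique
    (hnash : ∀ (i : P) (c : Fin k),
      ∑ j ∈ univ.filter (fun j => s j = c), u j i ≤
        ∑ j ∈ univ.filter (fun j => s j = s i), u j i) :
    (k : ℝ) * (∑ i, ∑ j ∈ univ.filter (fun j => s j = s i), u j i) ≥
      ∑ i, ∑ j, u j i := by
  rw [ge_iff_le, Finset.mul_sum]
  apply Finset.sum_le_sum
  intro i _
  have h1 : ∑ j, u j i = ∑ c : Fin k, ∑ j ∈ univ.filter (fun j => s j = c), u j i := by
    rw [← Finset.sum_fiberwise (univ : Finset P) s (fun j => u j i)]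
  rw [h1]
  calc ∑ c : Fin k, ∑ j ∈ univ.filter (fun j => s j = c), u j i
      ≤ ∑ _c : Fin k, ∑ j ∈ univ.filter (fun j => s j = s i), u j i :=
        Finset.sum_le_sum fun c _ => hnash i c
    _ = (k : ℝ) * ∑ j ∈ univ.filter (fun j => s j = s i), u j i := by
        simp [Finset.sum_const, nsmul_eq_mul]
end

section
/- In any fully altruistic Nash equilibrium of the social k-grouping game, social welfare is at least 1/k of the optimum: k·U(s) ≥ Σ_i Σ_j u_{ji}. -/
open Finset

/-- In any fully altruistic Nash equilibrium of the social k-grouping game,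
k·U(s) ≥ Σ_i Σ_j u_{ji}. -/
theorem stmt_7 {P : Type*} [Fintype P] [DecidableEq P] (k : ℕ) (hk : 1 ≤ k)
    (u : P → P → ℝ) (hu : ∀ i j, 0 ≤ u i j) (hdiag : ∀ i, u i i = 0)
    (s : P → Fin k)
    -- altruistic Nash: accounting for incoming and outgoing weights
    (hnash : ∀ (i : P) (c : Fin k),
      ∑ j ∈ univ.filter (fun j => s j = c), (u i j + u j i) ≤
        ∑ j ∈ univ.filter (fun j => s j = s i), (u i j + u j i)) :
    (k : ℝ) * (∑ i, ∑ j ∈ univ.filter (fun j => s j = s i), u j i) ≥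
      ∑ i, ∑ j, u j i := by
  -- step 1: per-player bound
  have key : ∀ i : P, ∑ j, (u i j + u j i) ≤
      (k : ℝ) * ∑ j ∈ univ.filter (fun j => s j = s i), (u i j + u j i) := by
    intro i
    have part : ∑ j, (u i j + u j i) =
        ∑ c : Fin k, ∑ j ∈ univ.filter (fun j => s j = c), (u i j + u j i) := by
      rw [Finset.sum_fiberwise]
    rw [part]
    calc ∑ c : Fin k, ∑ j ∈ univ.filter (fun j => s j = c), (u i j + u j i)
        ≤ ∑ _c : Fin k, ∑ j ∈ univ.filter (fun j => s j = s i), (u i j + u j i) :=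
          Finset.sum_le_sum fun c _ => hnash i c
      _ = (k : ℝ) * ∑ j ∈ univ.filter (fun j => s j = s i), (u i j + u j i) := by
          simp [Finset.sum_const, Fintype.card_fin, mul_comm]
  -- symmetry of the filtered double sum
  have sym : ∑ i, ∑ j ∈ univ.filter (fun j => s j = s i), u i j =
      ∑ i, ∑ j ∈ univ.filter (fun j => s j = s i), u j i := by
    simp only [Finset.sum_filter]
    rw [Finset.sum_comm]
    apply Finset.sum_congr rfl
    intro i _
    apply Finset.sum_congr rfl
    intro j _
    simp [eq_comm]
  have sym2 : ∑ i, ∑ j, u i j = ∑ i, ∑ j, u j i := Finset.sum_comm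
  have total := Finset.sum_le_sum fun i (_ : i ∈ (univ : Finset P)) => key i
  simp only [Finset.sum_add_distrib, ← Finset.mul_sum] at total
  rw [sym, sym2] at total
  linarith
end

section
/- The selfish and altruistic Price of Anarchy lower bound of k for k-grouping games: in the 2k-player instance with players a_1,...,a_k, b_1,...,b_k, symmetric weights u_{a_i b_i} = 1, u_{a_i a_j} = u_{b_i b_j} = 1 for i ≠ j, and 0 otherwise, the profile with cliques {a_i, b_i} for each i is both a pure Nash equilibrium and a fully altruistic Nash equilibrium, with social welfare 2k, while the optimal welfare is 2k². -/
open Finset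

/-- The 2k-player k-grouping instance with cliques {a_i, b_i} is both a pure
and a fully altruistic Nash equilibrium of welfare 2k, while the optimum is 2k². -/
theorem stmt_8 (k : ℕ) (hk : 1 ≤ k)
    (u : (Fin k ⊕ Fin k) → (Fin k ⊕ Fin k) → ℝ)
    (h_ab : ∀ i j : Fin k, u (Sum.inl i) (Sum.inr j) = if i = j then 1 else 0)
    (h_ba : ∀ i j : Fin k, u (Sum.inr i) (Sum.inl j) = if i = j then 1 else 0)
    (h_aa : ∀ i j : Fin k, u (Sum.inl i) (Sum.inl j) = if i = j then 0 else 1)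
    (h_bb : ∀ i j : Fin k, u (Sum.inr i) (Sum.inr j) = if i = j then 0 else 1)
    (s : (Fin k ⊕ Fin k) → Fin k)
    (hs : ∀ i : Fin k, s (Sum.inl i) = i ∧ s (Sum.inr i) = i) :
    -- pure Nash equilibrium
    (∀ (p : Fin k ⊕ Fin k) (c : Fin k),
      ∑ j ∈ univ.filter (fun j => s j = c ∧ j ≠ p), u j p ≤
        ∑ j ∈ univ.filter (fun j => s j = s p ∧ j ≠ p), u j p) ∧
    -- fully altruistic Nash equilibrium
    (∀ (p : Fin k ⊕ Fin k) (c : Fin k),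
      ∑ j ∈ univ.filter (fun j => s j = c ∧ j ≠ p), (u p j + u j p) ≤
        ∑ j ∈ univ.filter (fun j => s j = s p ∧ j ≠ p), (u p j + u j p)) ∧
    -- welfare of the equilibrium
    (∑ p, ∑ j ∈ univ.filter (fun j => s j = s p), u j p) = 2 * (k : ℝ) ∧
    -- welfare of the optimum
    (∑ p, ∑ j, u j p) = 2 * (k : ℝ) ^ 2 := by
  have hA : ∀ i, s (Sum.inl i) = i := fun i => (hs i).1
  have hB : ∀ i, s (Sum.inr i) = i := fun i => (hs i).2
  have hne : ∀ c : Fin k, (Sum.inl c : Fin k ⊕ Fin k) ≠ Sum.inr c := by simp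
  -- the filter sets
  have f1 : ∀ i : Fin k, univ.filter (fun j => s j = i ∧ j ≠ (Sum.inl i : Fin k ⊕ Fin k))
      = {Sum.inr i} := by
    intro i; ext j; cases j <;> simp [hA, hB] <;> aesop
  have f2 : ∀ i : Fin k, univ.filter (fun j => s j = i ∧ j ≠ (Sum.inr i : Fin k ⊕ Fin k))
      = {Sum.inl i} := by
    intro i; ext j; cases j <;> simp [hA, hB] <;> aesop
  have f3 : ∀ (i c : Fin k), c ≠ i →
      univ.filter (fun j => s j = c ∧ j ≠ (Sum.inl i : Fin k ⊕ Fin k))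
      = {Sum.inl c, Sum.inr c} := by
    intro i c hci; ext j; cases j <;> simp [hA, hB] <;> aesop
  have f4 : ∀ (i c : Fin k), c ≠ i →
      univ.filter (fun j => s j = c ∧ j ≠ (Sum.inr i : Fin k ⊕ Fin k))
      = {Sum.inl c, Sum.inr c} := by
    intro i c hci; ext j; cases j <;> simp [hA, hB] <;> aesop
  -- sums equal 1
  have key1 : ∀ (p : Fin k ⊕ Fin k) (c : Fin k),
      ∑ j ∈ univ.filter (fun j => s j = c ∧ j ≠ p), u j p = 1 := by
    rintro (i | i) c
    · rcases eq_or_ne c i with rfl | hci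
      · rw [f1]; simp [h_ba]
      · rw [f3 i c hci, Finset.sum_pair (hne c), h_aa, h_ba]; simp [hci]
    · rcases eq_or_ne c i with rfl | hci
      · rw [f2]; simp [h_ab]
      · rw [f4 i c hci, Finset.sum_pair (hne c), h_ab, h_bb]; simp [hci]
  have key2 : ∀ (p : Fin k ⊕ Fin k) (c : Fin k),
      ∑ j ∈ univ.filter (fun j => s j = c ∧ j ≠ p), u p j = 1 := by
    rintro (i | i) c
    · rcases eq_or_ne c i with rfl | hci
      · rw [f1]; simp [h_ab]
      · rw [f3 i c hci, Finset.sum_pair (hne c), h_aa, h_ab]; simp [Ne.symm hci]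
    · rcases eq_or_ne c i with rfl | hci
      · rw [f2]; simp [h_ba]
      · rw [f4 i c hci, Finset.sum_pair (hne c), h_ba, h_bb]; simp [Ne.symm hci]
  refine ⟨?_, ?_, ?_, ?_⟩
  · intro p c; rw [key1 p c, key1 p (s p)]
  · intro p c
    rw [Finset.sum_add_distrib, Finset.sum_add_distrib, key1 p c, key2 p c,
      key1 p (s p), key2 p (s p)]
  · -- welfare 2k
    have fcl : ∀ i : Fin k, univ.filter (fun j => s j = i)
        = ({Sum.inl i, Sum.inr i} : Finset (Fin k ⊕ Fin k)) := by
      intro i; ext j; cases j <;> simp [hA, hB, eq_comm]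
    rw [Fintype.sum_sum_type]
    have t1 : ∀ i : Fin k, ∑ j ∈ univ.filter (fun j => s j = s (Sum.inl i)), u j (Sum.inl i) = 1 := by
      intro i; rw [hA, fcl, Finset.sum_pair (hne i), h_aa, h_ba]; simp
    have t2 : ∀ i : Fin k, ∑ j ∈ univ.filter (fun j => s j = s (Sum.inr i)), u j (Sum.inr i) = 1 := by
      intro i; rw [hB, fcl, Finset.sum_pair (hne i), h_ab, h_bb]; simp
    simp only [t1, t2, Finset.sum_const, card_univ, Fintype.card_fin, nsmul_eq_mul, mul_one]
    ring
  · -- optimum 2k^2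
    have hrow0 : ∀ i : Fin k, ∑ a : Fin k, (if a = i then (0:ℝ) else 1) = (k:ℝ) - 1 := by
      intro i
      have h : ∀ a : Fin k, (if a = i then (0:ℝ) else 1) = 1 - (if a = i then (1:ℝ) else 0) := by
        intro a; split <;> ring
      simp_rw [h, Finset.sum_sub_distrib, Finset.sum_ite_eq', Finset.sum_const, card_univ,
        Fintype.card_fin, mem_univ, if_true, nsmul_eq_mul, mul_one]
    have hrow1 : ∀ i : Fin k, ∑ a : Fin k, (if a = i then (1:ℝ) else 0) = 1 := by
      intro i; rw [Finset.sum_ite_eq']; simp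
    rw [Fintype.sum_sum_type]
    have t1 : ∀ i : Fin k, ∑ j, u j (Sum.inl i) = (k:ℝ) := by
      intro i
      rw [Fintype.sum_sum_type]
      simp_rw [h_aa, h_ba]
      rw [hrow0 i, hrow1 i]; ring
    have t2 : ∀ i : Fin k, ∑ j, u j (Sum.inr i) = (k:ℝ) := by
      intro i
      rw [Fintype.sum_sum_type]
      simp_rw [h_ab, h_bb]
      rw [hrow0 i, hrow1 i]; ring
    simp only [t1, t2, Finset.sum_const, card_univ, Fintype.card_fin, nsmul_eq_mul]
    ring
end

section
/- The Price of Tribalism lower bound of 2k−1 for k-grouping games: in the 2k-player instance with tribes {a_i, b_i}, symmetric weights u_{a_i b_i} = 1, u_{a_i a_j} = u_{b_i b_j} = 2 for i ≠ j, and 0 otherwise, the profile with cliques {a_i, b_i} is a tribal Nash equilibrium with social welfare 2k, while the optimum has welfare 4k² − 2k. -/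
open Finset

/-- The 2k-player k-grouping instance with tribes {a_i, b_i}: the profile with
cliques {a_i, b_i} is a tribal Nash equilibrium of welfare 2k, while the
optimum has welfare 4k² − 2k. -/
theorem stmt_9 (k : ℕ) (hk : 1 ≤ k)
    (u : (Fin k ⊕ Fin k) → (Fin k ⊕ Fin k) → ℝ)
    (h_ab : ∀ i j : Fin k, u (Sum.inl i) (Sum.inr j) = if i = j then 1 else 0)
    (h_ba : ∀ i j : Fin k, u (Sum.inr i) (Sum.inl j) = if i = j then 1 else 0)
    (h_aa : ∀ i j : Fin k, u (Sum.inl i) (Sum.inl j) = if i = j then 0 else 2)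
    (h_bb : ∀ i j : Fin k, u (Sum.inr i) (Sum.inr j) = if i = j then 0 else 2)
    (τ : (Fin k ⊕ Fin k) → ℕ)
    (hτ : ∀ i : Fin k, τ (Sum.inl i) = (i : ℕ) ∧ τ (Sum.inr i) = (i : ℕ))
    (s : (Fin k ⊕ Fin k) → Fin k)
    (hs : ∀ i : Fin k, s (Sum.inl i) = i ∧ s (Sum.inr i) = i)
    -- player utilities and tribal utilities, for arbitrary profiles
    (ui : ((Fin k ⊕ Fin k) → Fin k) → (Fin k ⊕ Fin k) → ℝ)
    (hui : ∀ t p, ui t p = ∑ j ∈ univ.filter (fun j => t j = t p), u j p)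
    (uτ : ((Fin k ⊕ Fin k) → Fin k) → (Fin k ⊕ Fin k) → ℝ)
    (huτ : ∀ t p, uτ t p = ∑ q ∈ univ.filter (fun q => τ q = τ p), ui t q) :
    -- tribal Nash equilibrium
    (∀ (p : Fin k ⊕ Fin k) (c : Fin k), uτ (Function.update s p c) p ≤ uτ s p) ∧
    -- welfare of the equilibrium
    (∑ p, ui s p) = 2 * (k : ℝ) ∧
    -- welfare of the optimum
    (∑ p, ∑ j, u j p) = 4 * (k : ℝ) ^ 2 - 2 * (k : ℝ) := by
  have hsl : ∀ m : Fin k, s (Sum.inl m) = m := fun m => (hs m).1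
  have hsr : ∀ m : Fin k, s (Sum.inr m) = m := fun m => (hs m).2
  have hτl : ∀ m : Fin k, τ (Sum.inl m) = (m : ℕ) := fun m => (hτ m).1
  have hτr : ∀ m : Fin k, τ (Sum.inr m) = (m : ℕ) := fun m => (hτ m).2
  -- tribe filter
  have htfil : ∀ i : Fin k, univ.filter (fun q => τ q = (i : ℕ))
      = ({Sum.inl i, Sum.inr i} : Finset (Fin k ⊕ Fin k)) := by
    intro i
    ext q
    rcases q with m | m <;>
      simp [hτl, hτr, Fin.val_inj]
  have hne : ∀ i : Fin k, (Sum.inl i : Fin k ⊕ Fin k) ≠ Sum.inr i := by simp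
  have huτ2 : ∀ (t : (Fin k ⊕ Fin k) → Fin k) (i : Fin k),
      uτ t (Sum.inl i) = ui t (Sum.inl i) + ui t (Sum.inr i)
      ∧ uτ t (Sum.inr i) = ui t (Sum.inl i) + ui t (Sum.inr i) := by
    intro t i
    constructor
    · rw [huτ, hτl, htfil, Finset.sum_pair (hne i)]
    · rw [huτ, hτr, htfil, Finset.sum_pair (hne i)]
  -- clique filter for s
  have hfil : ∀ i : Fin k, univ.filter (fun j => s j = i)
      = ({Sum.inl i, Sum.inr i} : Finset (Fin k ⊕ Fin k)) := by
    intro i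
    ext j
    rcases j with m | m <;> simp [hsl, hsr]
  have huiA : ∀ i : Fin k, ui s (Sum.inl i) = 1 := by
    intro i
    rw [hui, hsl, hfil, Finset.sum_pair (hne i)]
    simp [h_aa, h_ba]
  have huiB : ∀ i : Fin k, ui s (Sum.inr i) = 1 := by
    intro i
    rw [hui, hsr, hfil, Finset.sum_pair (hne i)]
    simp [h_ab, h_bb]
  refine ⟨?_, ?_, ?_⟩
  · -- tribal Nash equilibrium
    intro p c
    rcases p with i | i
    · by_cases hc : c = i
      · rw [hc, show Function.update s (Sum.inl i) i = s by
          nth_rewrite 2 [← hsl i]; exact Function.update_eq_self _ s]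
      · set t := Function.update s (Sum.inl i) c with ht
        have ht1 : t (Sum.inl i) = c := Function.update_self _ _ _
        have ht2 : ∀ j, j ≠ Sum.inl i → t j = s j := fun j h =>
          Function.update_of_ne h _ _
        have hf1 : univ.filter (fun j => t j = t (Sum.inl i))
            = ({Sum.inl i, Sum.inl c, Sum.inr c} : Finset (Fin k ⊕ Fin k)) := by
          ext j
          rcases j with m | m <;>
            simp [ht1, ht, Function.update_apply, hsl, hsr, eq_comm (a := c)] <;>
            · rcases eq_or_ne m i with h | h <;> simp [h, hc, eq_comm]
        have hf2 : univ.filter (fun j => t j = t (Sum.inr i))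
            = ({Sum.inr i} : Finset (Fin k ⊕ Fin k)) := by
          have : t (Sum.inr i) = i := by rw [ht2 _ (by simp), hsr]
          ext j
          rcases j with m | m <;>
            simp [this, ht, Function.update_apply, hsl, hsr] <;>
            · rcases eq_or_ne m i with h | h <;> simp [h, hc, Ne.symm hc]
        have hA : ui t (Sum.inl i) = 2 := by
          rw [hui, hf1, Finset.sum_insert (by simp [hc, Ne.symm hc]),
            Finset.sum_pair (hne c)]
          simp [h_aa, h_ba, hc, Ne.symm hc]
        have hB : ui t (Sum.inr i) = 0 := by
          rw [hui, hf2, Finset.sum_singleton]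
          simp [h_bb]
        rw [(huτ2 t i).1, (huτ2 s i).1, hA, hB, huiA, huiB]
        norm_num
    · by_cases hc : c = i
      · rw [hc, show Function.update s (Sum.inr i) i = s by
          nth_rewrite 2 [← hsr i]; exact Function.update_eq_self _ s]
      · set t := Function.update s (Sum.inr i) c with ht
        have ht1 : t (Sum.inr i) = c := Function.update_self _ _ _
        have ht2 : ∀ j, j ≠ Sum.inr i → t j = s j := fun j h =>
          Function.update_of_ne h _ _
        have hf1 : univ.filter (fun j => t j = t (Sum.inr i))
            = ({Sum.inr i, Sum.inl c, Sum.inr c} : Finset (Fin k ⊕ Fin k)) := by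
          ext j
          rcases j with m | m <;>
            simp [ht1, ht, Function.update_apply, hsl, hsr, eq_comm (a := c)] <;>
            · rcases eq_or_ne m i with h | h <;> simp [h, hc, eq_comm]
        have hf2 : univ.filter (fun j => t j = t (Sum.inl i))
            = ({Sum.inl i} : Finset (Fin k ⊕ Fin k)) := by
          have : t (Sum.inl i) = i := by rw [ht2 _ (by simp), hsl]
          ext j
          rcases j with m | m <;>
            simp [this, ht, Function.update_apply, hsl, hsr] <;>
            · rcases eq_or_ne m i with h | h <;> simp [h, hc, Ne.symm hc]
        have hB : ui t (Sum.inr i) = 2 := by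
          rw [hui, hf1, Finset.sum_insert (by simp [hc, Ne.symm hc]),
            Finset.sum_pair (by simp : (Sum.inl c : Fin k ⊕ Fin k) ≠ Sum.inr c)]
          simp [h_ab, h_bb, hc, Ne.symm hc]
        have hA : ui t (Sum.inl i) = 0 := by
          rw [hui, hf2, Finset.sum_singleton]
          simp [h_aa]
        rw [(huτ2 t i).2, (huτ2 s i).2, hA, hB, huiA, huiB]
        norm_num
  · -- welfare of the equilibrium
    rw [Fintype.sum_sum_type]
    simp [huiA, huiB]
    ring
  · -- welfare of the optimum
    have inner : ∀ p : Fin k ⊕ Fin k, (∑ j, u j p) = 2 * (k : ℝ) - 1 := by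
      intro p
      have key : ∀ i : Fin k, (∑ m : Fin k, (if m = i then (0:ℝ) else 2))
          = 2 * (k : ℝ) - 2 := by
        intro i
        have h1 : ∀ m : Fin k, (if m = i then (0:ℝ) else 2)
            = 2 - (if m = i then (2:ℝ) else 0) := by
          intro m; split <;> ring
        simp only [h1]
        rw [Finset.sum_sub_distrib, Finset.sum_const, Finset.sum_ite_eq' univ i
          (fun _ => (2:ℝ))]
        simp [mul_comm]
      have key1 : ∀ i : Fin k, (∑ m : Fin k, (if m = i then (1:ℝ) else 0)) = 1 := by
        intro i
        rw [Finset.sum_ite_eq' univ i (fun _ => (1:ℝ))]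
        simp
      rcases p with i | i
      · rw [Fintype.sum_sum_type]
        simp only [h_aa, h_ba]
        rw [key i, key1 i]; ring
      · rw [Fintype.sum_sum_type]
        simp only [h_ab, h_bb]
        rw [key i, key1 i]; ring
    rw [Fintype.sum_sum_type]
    simp only [inner, Finset.sum_const, Finset.card_univ, Fintype.card_fin,
      nsmul_eq_mul]
    ring
end

section
/- In the network contribution game with additive rewards f_e(x,y) = c_e·(x+y), every pure tribal Nash equilibrium s satisfies 2·U(s) ≥ U(s*), where U(s*) = Σ_i B_i · max_{e ∋ i} c_e is the optimal social welfare. -/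
open Finset

/-- In the network contribution game with additive rewards f_e(x,y)=c_e(x+y),
every pure tribal Nash equilibrium s satisfies 2·U(s) ≥ U(s*), where
U(s*) = Σ_i B_i · max_{e ∋ i} c_e is the optimal social welfare. -/
theorem stmt_10 {V E : Type*} [Fintype V] [Fintype E] [DecidableEq V] [DecidableEq E]
    (ends : E → Finset V) (hends : ∀ e, (ends e).card = 2)
    (B : V → ℝ) (hB : ∀ i, 0 ≤ B i)
    (c : E → ℝ) (hc : ∀ e, 0 < c e)
    (τ : V → ℕ)
    -- every player has at least one incident edge
    (hinc : ∀ i : V, (univ.filter (fun e : E => i ∈ ends e)).Nonempty)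
    -- the equilibrium allocation: nonnegative, supported on incident edges,
    -- within budget
    (s : V → E → ℝ)
    (hpos : ∀ i e, 0 ≤ s i e)
    (hsupp : ∀ i e, i ∉ ends e → s i e = 0)
    (hbudget : ∀ i, ∑ e, s i e ≤ B i)
    -- utilities: each incident edge pays c_e times total contribution on it
    (ui : (V → E → ℝ) → V → ℝ)
    (hui : ∀ t i, ui t i = ∑ e ∈ univ.filter (fun e => i ∈ ends e), c e * ∑ j, t j e)
    (uτ : (V → E → ℝ) → V → ℝ)
    (huτ : ∀ t i, uτ t i = ∑ j ∈ univ.filter (fun j => τ j = τ i), ui t j)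
    -- tribal Nash: no unilateral reallocation improves the tribe's utility
    (hnash : ∀ (i : V) (t : E → ℝ), (∀ e, 0 ≤ t e) → (∀ e, i ∉ ends e → t e = 0) →
      (∑ e, t e ≤ B i) → uτ (Function.update s i t) i ≤ uτ s i) :
    2 * (∑ i, ui s i) ≥
      ∑ i, B i * (univ.filter (fun e : E => i ∈ ends e)).sup' (hinc i) c := by
  -- sum-swapping helper
  have swap : ∀ (T : Finset V) (g : E → ℝ),
      (∑ j ∈ T, ∑ e ∈ univ.filter (fun e => j ∈ ends e), g e)
        = ∑ e : E, ((T.filter (fun j => j ∈ ends e)).card : ℝ) * g e := by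
    intro T g
    simp_rw [Finset.sum_filter]
    rw [Finset.sum_comm]
    refine Finset.sum_congr rfl fun e _ => ?_
    rw [← Finset.sum_filter, Finset.sum_const, nsmul_eq_mul]
  -- per player inequality
  have key : ∀ i : V, B i * (univ.filter (fun e : E => i ∈ ends e)).sup' (hinc i) c
      ≤ 2 * ∑ e : E, c e * s i e := by
    intro i
    obtain ⟨estar, hes, hsup⟩ := Finset.exists_mem_eq_sup' (hinc i) c
    have hies : i ∈ ends estar := (Finset.mem_filter.mp hes).2
    set t : E → ℝ := fun e => if e = estar then B i else 0 with ht
    have ht0 : ∀ e, 0 ≤ t e := by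
      intro e; simp only [ht]; split
      · exact hB i
      · exact le_refl 0
    have htsupp : ∀ e, i ∉ ends e → t e = 0 := by
      intro e he; simp only [ht]
      split
      · next h => exact absurd (h ▸ hies) he
      · rfl
    have htsum : ∑ e, t e = B i := by simp [ht]
    have hN := hnash i t ht0 htsupp (le_of_eq htsum)
    simp only [huτ, hui] at hN
    have hupd : ∀ e, (∑ k, Function.update s i t k e) = (∑ k, s k e) + (t e - s i e) := by
      intro e
      calc (∑ k, Function.update s i t k e)
          = ∑ k, (s k e + if k = i then t e - s i e else 0) := by
            refine Finset.sum_congr rfl fun k _ => ?_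
            by_cases h : k = i
            · subst h; rw [Function.update_self, if_pos rfl]; ring
            · rw [Function.update_of_ne h, if_neg h, add_zero]
        _ = (∑ k, s k e) + (t e - s i e) := by
            rw [Finset.sum_add_distrib, Finset.sum_ite_eq' univ i fun _ => t e - s i e]
            simp
    simp_rw [hupd, mul_add, mul_sub, Finset.sum_add_distrib, Finset.sum_sub_distrib] at hN
    -- hN : Σ + (A - D) ≤ Σ, hence A ≤ D
    have hAD : (∑ j ∈ univ.filter (fun j => τ j = τ i),
          ∑ e ∈ univ.filter (fun e => j ∈ ends e), c e * t e)
        ≤ ∑ j ∈ univ.filter (fun j => τ j = τ i),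
          ∑ e ∈ univ.filter (fun e => j ∈ ends e), c e * s i e := by linarith
    rw [swap, swap] at hAD
    set T := univ.filter (fun j => τ j = τ i) with hT
    -- lower bound for the t-side
    have hlow : c estar * B i ≤ ∑ e : E, ((T.filter (fun j => j ∈ ends e)).card : ℝ) * (c e * t e) := by
      have hterm : c estar * B i ≤ ((T.filter (fun j => j ∈ ends estar)).card : ℝ) * (c estar * t estar) := by
        have hmem : i ∈ T.filter (fun j => j ∈ ends estar) := by
          simp [hT, hies]
        have hcard : (1 : ℝ) ≤ ((T.filter (fun j => j ∈ ends estar)).card : ℝ) := by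
          exact_mod_cast Finset.card_pos.mpr ⟨i, hmem⟩
        have : t estar = B i := by simp [ht]
        rw [this]
        nlinarith [mul_nonneg (hc estar).le (hB i)]
      refine le_trans hterm (Finset.single_le_sum (f := fun e => ((T.filter (fun j => j ∈ ends e)).card : ℝ) * (c e * t e)) (fun e _ => ?_) (Finset.mem_univ estar))
      exact mul_nonneg (Nat.cast_nonneg _) (mul_nonneg (hc e).le (ht0 e))
    -- upper bound for the s-side
    have hhigh : (∑ e : E, ((T.filter (fun j => j ∈ ends e)).card : ℝ) * (c e * s i e))
        ≤ ∑ e : E, 2 * (c e * s i e) := by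
      refine Finset.sum_le_sum fun e _ => ?_
      have hsub : T.filter (fun j => j ∈ ends e) ⊆ ends e := fun x hx => (Finset.mem_filter.mp hx).2
      have hcard : ((T.filter (fun j => j ∈ ends e)).card : ℝ) ≤ 2 := by
        have := Finset.card_le_card hsub
        rw [hends e] at this
        exact_mod_cast this
      exact mul_le_mul_of_nonneg_right hcard (mul_nonneg (hc e).le (hpos i e))
    calc B i * (univ.filter (fun e : E => i ∈ ends e)).sup' (hinc i) c
        = c estar * B i := by rw [hsup]; ring
      _ ≤ ∑ e : E, 2 * (c e * s i e) := le_trans hlow (le_trans hAD hhigh)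
      _ = 2 * ∑ e : E, c e * s i e := by rw [Finset.mul_sum]
  -- now sum over i and compare with total utility
  have hui_ge : ∀ i : V, (∑ e : E, c e * s i e) ≤ ui s i := by
    intro i
    rw [hui]
    have h1 : (∑ e : E, c e * s i e) = ∑ e ∈ univ.filter (fun e => i ∈ ends e), c e * s i e := by
      symm
      refine Finset.sum_subset (Finset.filter_subset _ _) fun e _ he => ?_
      rw [hsupp i e (by simpa using he), mul_zero]
    rw [h1]
    refine Finset.sum_le_sum fun e he => ?_
    refine mul_le_mul_of_nonneg_left ?_ (hc e).le
    exact Finset.single_le_sum (fun k _ => hpos k e) (Finset.mem_univ i)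
  have h2 : (∑ i, B i * (univ.filter (fun e : E => i ∈ ends e)).sup' (hinc i) c)
      ≤ 2 * ∑ i, ∑ e : E, c e * s i e := by
    rw [Finset.mul_sum]
    exact Finset.sum_le_sum fun i _ => key i
  have h3 : (2 : ℝ) * (∑ i, ∑ e : E, c e * s i e) ≤ 2 * ∑ i, ui s i := by
    have := Finset.sum_le_sum fun i (_ : i ∈ (univ : Finset V)) => hui_ge i
    linarith
  linarith
end

section
/- Lower bound of 2 for the PoT of additive network contribution games: in a 3-player path x — y — z with reward functions 2(a+b) on edge {x,y} and (a+b) on edge {y,z}, budgets B_x = B_z = 0, B_y = 1, tribes {x} and {y,z}, the profile where y invests their whole budget in edge {y,z} is a tribal Nash equilibrium (stable also under joint deviations by the tribe {y,z}) with social welfare 2, while the optimum has social welfare 4. -/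
/-- Lower bound of 2 for the PoT of additive network contribution games:
3-player path x—y—z, rewards 2(a+b) on {x,y} and (a+b) on {y,z}, budgets
0,1,0, tribes {x} and {y,z}. The profile where y invests everything in {y,z}
is stable even under joint deviations of the tribe {y,z}, has welfare 2,
while the optimum has welfare 4. -/
theorem stmt_11
    -- edge rewards as functions of a full profile p : player → edge → ℝ,
    -- players 0=x, 1=y, 2=z; edges 0={x,y}, 1={y,z}
    (w0 w1 U : (Fin 3 → Fin 2 → ℝ) → ℝ)
    (hw0 : ∀ p, w0 p = 2 * (p 0 0 + p 1 0))
    (hw1 : ∀ p, w1 p = p 1 1 + p 2 1)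
    -- social welfare: each edge pays both endpoints
    (hU : ∀ p, U p = (w0 p) + (w0 p + w1 p) + (w1 p))
    -- the equilibrium profile: y invests its whole budget into edge {y,z}
    (s : Fin 3 → Fin 2 → ℝ)
    (hs : s = fun i e => if i = 1 ∧ e = 1 then 1 else 0) :
    -- stability: no joint deviation of the tribe {y,z} (x's allocation fixed)
    -- respecting budgets (B_y = 1, B_z = 0), nonnegativity and incidence
    -- increases the tribe's total utility (w0 + w1) + w1 beyond its value 2
    (∀ p : Fin 3 → Fin 2 → ℝ, (∀ i e, 0 ≤ p i e) → p 0 = s 0 →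
      (p 1 0 + p 1 1 ≤ 1) → (p 2 0 = 0) → (p 2 1 ≤ 0) →
      (w0 p + w1 p) + w1 p ≤ (w0 s + w1 s) + w1 s) ∧
    -- welfare at the equilibrium
    U s = 2 ∧
    -- welfare of the optimum, where y invests everything into edge {x,y}
    U (fun i e => if i = 1 ∧ e = 0 then 1 else 0) = 4 := by
  subst hs
  refine ⟨?_, ?_, ?_⟩
  · intro p _ h0 hb _ hz
    have hx : p 0 0 = 0 := by rw [h0]; simp
    rw [hw0, hw1, hw0, hw1]
    simp [hx]
    nlinarith
  · rw [hU, hw0, hw1]; norm_num [Fin.ext_iff]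
  · rw [hU, hw0, hw1]; norm_num [Fin.ext_iff]
end

section
/- Tribal smoothness of atomic linear congestion games: for any atomic linear congestion game with edge coefficients α_e ≥ 0 and any tribal partition τ, and any two strategy profiles s, s*, Σ_i ( c_i^τ(s*_i; s_{-i}) − c_i^τ(s) + c_i(s) ) ≤ (8/3)·C(s*) + (1/3)·C(s), where C(s) = Σ_e α_e · n_e(s)², n_e(s) is the number of players using resource e in s, and c_i^τ(s) = Σ_e α_e · n_e^{τ(i)}(s) · n_e(s) with n_e^t(s) the number of tribe-t players using e. -/
open Finset

lemma aux_card_update {P : Type*} [Fintype P] [DecidableEq P] (i : P)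
    (p q : P → Prop) [DecidablePred p] [DecidablePred q]
    (h : ∀ j, j ≠ i → (p j ↔ q j)) :
    ((univ.filter p).card : ℝ)
      = ((univ.filter q).card : ℝ) + (if p i then 1 else 0) - (if q i then 1 else 0) := by
  rw [Finset.card_filter, Finset.card_filter]
  push_cast
  rw [← Finset.sum_erase_add _ _ (Finset.mem_univ i)]
  rw [← Finset.sum_erase_add _ _ (Finset.mem_univ i)]
  have h2 : ∀ j ∈ univ.erase i, (if p j then (1:ℝ) else 0) = (if q j then 1 else 0) := by
    intro j hj
    rw [Finset.mem_erase] at hj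
    simp [h j hj.1]
  rw [Finset.sum_congr rfl h2]
  ring

lemma aux_fiber {P : Type*} [Fintype P] [DecidableEq P] (τ : P → ℕ)
    (p : P → Prop) [DecidablePred p] (f : ℕ → ℝ) :
    (∑ i, if p i then f (τ i) else 0)
      = ∑ k ∈ univ.image τ, ((univ.filter fun j => p j ∧ τ j = k).card : ℝ) * f k := by
  rw [← Finset.sum_fiberwise_of_maps_to (fun i _ => Finset.mem_image_of_mem τ (Finset.mem_univ i))
      (fun i => if p i then f (τ i) else 0)]
  refine Finset.sum_congr rfl fun k hk => ?_
  have h1 : ∀ j ∈ univ.filter (fun i => τ i = k), (if p j then f (τ j) else 0)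
      = (if p j then f k else 0) := by
    intro j hj
    rw [Finset.mem_filter] at hj
    rw [hj.2]
  rw [Finset.sum_congr rfl h1, ← Finset.sum_filter, Finset.filter_filter, Finset.sum_const,
    nsmul_eq_mul]
  have h3 : (univ.filter fun a => τ a = k ∧ p a) = univ.filter fun j => p j ∧ τ j = k := by
    apply Finset.filter_congr
    intro x _
    exact and_comm
  rw [h3]


lemma aux_key (T : Finset ℕ) (x y : ℕ → ℕ) (X Y : ℕ)
    (hX : ∑ k ∈ T, (x k : ℝ) = (X : ℝ)) (hY : ∑ k ∈ T, (y k : ℝ) = (Y : ℝ)) :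
    ∑ k ∈ T, ((y k : ℝ) * ((x k : ℝ) + (X : ℝ) + 1) + (x k : ℝ) * (1 - (x k : ℝ)))
      ≤ (8/3) * (Y : ℝ)^2 + (1/3) * (X : ℝ)^2 := by
  have hX0 : (0:ℝ) ≤ (X:ℝ) := by positivity
  have hx0 : ∀ k, (0:ℝ) ≤ (x k : ℝ) := fun k => by positivity
  have hy0 : ∀ k, (0:ℝ) ≤ (y k : ℝ) := fun k => by positivity
  have hx1 : ∀ k, (x k : ℝ) ≤ (x k : ℝ)^2 := by
    intro k
    have : x k ≤ (x k)^2 := Nat.le_self_pow two_ne_zero (x k)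
    exact_mod_cast this
  have hxsum : (X:ℝ) ≤ ∑ k ∈ T, (x k : ℝ)^2 := by
    rw [← hX]; exact Finset.sum_le_sum fun k _ => hx1 k
  -- rewrite LHS
  have hsplit : ∑ k ∈ T, ((y k : ℝ) * ((x k : ℝ) + (X : ℝ) + 1) + (x k : ℝ) * (1 - (x k : ℝ)))
      = (∑ k ∈ T, (y k : ℝ) * (x k : ℝ)) + ((X:ℝ) + 1) * (Y:ℝ) + (X:ℝ)
        - ∑ k ∈ T, (x k : ℝ)^2 := by
    rw [← hX, ← hY, Finset.mul_sum, ← Finset.sum_add_distrib, ← Finset.sum_add_distrib,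
      ← Finset.sum_sub_distrib]
    · apply Finset.sum_congr rfl
      intro k _
      ring
  rw [hsplit]
  -- case on Y
  match Y, hY with
  | 0, hY =>
    have hyz : ∀ k ∈ T, (y k : ℝ) = 0 := by
      intro k hk
      have := (Finset.sum_eq_zero_iff_of_nonneg (fun k _ => hy0 k)).1 (by rw [hY]; norm_num) k hk
      exact this
    have : ∑ k ∈ T, (y k : ℝ) * (x k : ℝ) = 0 :=
      Finset.sum_eq_zero fun k hk => by rw [hyz k hk, zero_mul]
    rw [this]
    push_cast
    nlinarith [sq_nonneg (X:ℝ)]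
  | 1, hY =>
    have hYnat : ∑ k ∈ T, y k = 1 := by exact_mod_cast hY
    have hex : ∃ k0 ∈ T, y k0 ≠ 0 := by
      by_contra hcon
      push_neg at hcon
      rw [Finset.sum_eq_zero hcon] at hYnat
      exact zero_ne_one hYnat
    obtain ⟨k0, hk0, hk0ne⟩ := hex
    have hle : y k0 ≤ 1 := hYnat ▸ Finset.single_le_sum (fun k _ => Nat.zero_le _) hk0
    have hyk0 : y k0 = 1 := le_antisymm hle (Nat.one_le_iff_ne_zero.2 hk0ne)
    have hrest : ∀ k ∈ T, k ≠ k0 → y k = 0 := by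
      intro k hk hkne
      have h1 : y k0 + ∑ j ∈ T.erase k0, y j = 1 := by
        rw [Finset.add_sum_erase T y hk0]; exact hYnat
      have h2 : ∑ j ∈ T.erase k0, y j = 0 := by omega
      have := Finset.sum_eq_zero_iff.1 h2 k (Finset.mem_erase.2 ⟨hkne, hk⟩)
      exact this
    have hxy : ∑ k ∈ T, (y k : ℝ) * (x k : ℝ) = (x k0 : ℝ) := by
      rw [Finset.sum_eq_single_of_mem k0 hk0]
      · rw [hyk0]; push_cast; ring
      · intro k hk hkne
        rw [hrest k hk hkne]; push_cast; ring
    have hxsumsplit : (x k0 : ℝ)^2 + ((X:ℝ) - (x k0 : ℝ)) ≤ ∑ k ∈ T, (x k : ℝ)^2 := by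
      have e1 : (x k0 : ℝ) + ∑ j ∈ T.erase k0, (x j : ℝ) = (X:ℝ) := by
        rw [Finset.add_sum_erase T (fun j => (x j : ℝ)) hk0]; exact hX
      have e2 : (x k0 : ℝ)^2 + ∑ j ∈ T.erase k0, (x j : ℝ)^2 = ∑ k ∈ T, (x k : ℝ)^2 := by
        rw [Finset.add_sum_erase T (fun j => (x j : ℝ)^2) hk0]
      have e3 : ∑ j ∈ T.erase k0, (x j : ℝ) ≤ ∑ j ∈ T.erase k0, (x j : ℝ)^2 :=
        Finset.sum_le_sum fun k _ => hx1 k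
      linarith
    rw [hxy]
    rcases Nat.lt_or_ge X 2 with hX2 | hX2
    · interval_cases X <;> push_cast at hxsumsplit ⊢ <;> nlinarith [sq_nonneg ((x k0 : ℝ) - 1), hxsumsplit]
    · have hX2' : (2:ℝ) ≤ (X:ℝ) := by exact_mod_cast hX2
      push_cast
      nlinarith [sq_nonneg ((x k0 : ℝ) - 1), mul_nonneg (sub_nonneg.2 hX2') (by linarith : (0:ℝ) ≤ (X:ℝ) - 1), hxsumsplit]
  | (m + 2), hY =>
    have hY2 : (2:ℝ) ≤ ((m + 2 : ℕ) : ℝ) := by push_cast; linarith [Nat.cast_nonneg (α := ℝ) m]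
    have hxy : ∑ k ∈ T, (y k : ℝ) * (x k : ℝ)
        ≤ (1/2) * ∑ k ∈ T, (x k : ℝ)^2 + (1/2) * ∑ k ∈ T, (y k : ℝ)^2 := by
      rw [Finset.mul_sum, Finset.mul_sum, ← Finset.sum_add_distrib]
      exact Finset.sum_le_sum fun k _ => by nlinarith [sq_nonneg ((x k : ℝ) - (y k : ℝ))]
    have hysq : ∑ k ∈ T, (y k : ℝ)^2 ≤ ((m + 2 : ℕ) : ℝ)^2 := by
      have h1 : ∀ k ∈ T, (y k : ℝ) ≤ ((m + 2 : ℕ) : ℝ) := by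
        intro k hk
        rw [← hY]
        exact Finset.single_le_sum (fun j _ => hy0 j) hk
      calc ∑ k ∈ T, (y k : ℝ)^2 ≤ ∑ k ∈ T, (y k : ℝ) * ((m + 2 : ℕ) : ℝ) := by
            apply Finset.sum_le_sum
            intro k hk
            rw [sq]
            exact mul_le_mul_of_nonneg_left (h1 k hk) (hy0 k)
        _ = ((m + 2 : ℕ) : ℝ)^2 := by rw [← Finset.sum_mul, hY, sq]
    nlinarith [sq_nonneg (2*(X:ℝ) - 3*((m + 2 : ℕ) : ℝ) - 3/2), sq_nonneg (((m + 2 : ℕ) : ℝ) - 2), hxsum]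

/-- Tribal (8/3, 1/3, τ)-smoothness of atomic linear congestion games. -/
theorem stmt_15 {P E : Type*} [Fintype P] [Fintype E] [DecidableEq P] [DecidableEq E]
    (α : E → ℝ) (hα : ∀ e, 0 ≤ α e)
    (τ : P → ℕ)
    -- congestion counts
    (n : E → (P → Finset E) → ℕ)
    (hn : ∀ e t, n e t = (univ.filter (fun j : P => e ∈ t j)).card)
    (nt : E → ℕ → (P → Finset E) → ℕ)
    (hnt : ∀ e k t, nt e k t = (univ.filter (fun j : P => e ∈ t j ∧ τ j = k)).card)
    -- player costs, tribal costs, social cost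
    (c : P → (P → Finset E) → ℝ)
    (hc : ∀ i t, c i t = ∑ e ∈ t i, α e * (n e t : ℝ))
    (cτ : P → (P → Finset E) → ℝ)
    (hcτ : ∀ i t, cτ i t = ∑ e, α e * (nt e (τ i) t : ℝ) * (n e t : ℝ))
    (C : (P → Finset E) → ℝ)
    (hC : ∀ t, C t = ∑ e, α e * (n e t : ℝ) ^ 2)
    (s sstar : P → Finset E) :
    ∑ i, (cτ i (Function.update s i (sstar i)) - cτ i s + c i s) ≤
      (8 / 3) * C sstar + (1 / 3) * C s := by
  classical
  set G : P → E → ℝ := fun i e =>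
    (if e ∈ sstar i then ((nt e (τ i) s : ℝ) + (n e s : ℝ) + 1) else 0)
    + (if e ∈ s i then (1 - (nt e (τ i) s : ℝ)) else 0) with hG
  -- Step 1: per-player bound
  have step1 : ∀ i, cτ i (Function.update s i (sstar i)) - cτ i s + c i s
      ≤ ∑ e, α e * G i e := by
    intro i
    rw [hcτ, hcτ, hc]
    have hcs : ∑ e ∈ s i, α e * (n e s : ℝ)
        = ∑ e, if e ∈ s i then α e * (n e s : ℝ) else 0 := by
      rw [Finset.sum_ite_mem, Finset.univ_inter]
    rw [hcs, ← Finset.sum_sub_distrib, ← Finset.sum_add_distrib]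
    apply Finset.sum_le_sum
    intro e _
    have hn' : ((n e (Function.update s i (sstar i)) : ℝ))
        = (n e s : ℝ) + (if e ∈ sstar i then 1 else 0) - (if e ∈ s i then 1 else 0) := by
      rw [hn, hn]
      have := aux_card_update i (fun j => e ∈ Function.update s i (sstar i) j)
        (fun j => e ∈ s j) (fun j hj => by simp [Function.update_of_ne hj])
      simpa using this
    have hnt' : ((nt e (τ i) (Function.update s i (sstar i)) : ℝ))
        = (nt e (τ i) s : ℝ) + (if e ∈ sstar i then 1 else 0) - (if e ∈ s i then 1 else 0) := by
      rw [hnt, hnt]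
      have := aux_card_update i (fun j => e ∈ Function.update s i (sstar i) j ∧ τ j = τ i)
        (fun j => e ∈ s j ∧ τ j = τ i) (fun j hj => by simp [Function.update_of_ne hj])
      simpa using this
    have h1 : (0:ℝ) ≤ (nt e (τ i) s : ℝ) := by positivity
    have h2 : (nt e (τ i) s : ℝ) ≤ (n e s : ℝ) := by
      have : nt e (τ i) s ≤ n e s := by
        rw [hn, hnt]
        apply Finset.card_le_card
        intro j hj
        rw [Finset.mem_filter] at hj ⊢
        exact ⟨hj.1, hj.2.1⟩
      exact_mod_cast this
    have h3 : e ∈ s i → (1:ℝ) ≤ (nt e (τ i) s : ℝ) := by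
      intro hmem
      have : 0 < nt e (τ i) s := by
        rw [hnt]
        exact Finset.card_pos.2 ⟨i, by simp [hmem]⟩
      exact_mod_cast this
    rw [hn', hnt']
    by_cases h4 : e ∈ sstar i <;> by_cases h5 : e ∈ s i <;>
      simp only [hG, h4, h5, if_true, if_false] <;>
      nlinarith [hα e, h3, h1, h2]
  -- per-edge key inequality
  have key : ∀ e, ∑ i, G i e ≤ (8/3) * (n e sstar : ℝ)^2 + (1/3) * (n e s : ℝ)^2 := by
    intro e
    have hXid : ∑ k ∈ univ.image τ, ((nt e k s : ℕ) : ℝ) = ((n e s : ℕ) : ℝ) := by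
      calc ∑ k ∈ univ.image τ, ((nt e k s : ℕ) : ℝ)
          = ∑ k ∈ univ.image τ,
            (((univ.filter (fun j : P => e ∈ s j ∧ τ j = k)).card : ℝ)) * 1 := by
            apply Finset.sum_congr rfl
            intro k _
            rw [hnt]
            ring
        _ = ∑ i, if e ∈ s i then (1:ℝ) else 0 := (aux_fiber τ _ _).symm
        _ = ((n e s : ℕ) : ℝ) := by
            rw [hn e s, Finset.card_filter]
            push_cast
            rfl
    have hYid : ∑ k ∈ univ.image τ, ((nt e k sstar : ℕ) : ℝ) = ((n e sstar : ℕ) : ℝ) := by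
      calc ∑ k ∈ univ.image τ, ((nt e k sstar : ℕ) : ℝ)
          = ∑ k ∈ univ.image τ,
            (((univ.filter (fun j : P => e ∈ sstar j ∧ τ j = k)).card : ℝ)) * 1 := by
            apply Finset.sum_congr rfl
            intro k _
            rw [hnt]
            ring
        _ = ∑ i, if e ∈ sstar i then (1:ℝ) else 0 := (aux_fiber τ _ _).symm
        _ = ((n e sstar : ℕ) : ℝ) := by
            rw [hn e sstar, Finset.card_filter]
            push_cast
            rfl
    have hGid : ∑ i, G i e = ∑ k ∈ univ.image τ,
        ((nt e k sstar : ℝ) * ((nt e k s : ℝ) + (n e s : ℝ) + 1)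
          + (nt e k s : ℝ) * (1 - (nt e k s : ℝ))) := by
      rw [hG]
      simp only
      rw [Finset.sum_add_distrib]
      rw [aux_fiber τ (fun j => e ∈ sstar j) (fun k => (nt e k s : ℝ) + (n e s : ℝ) + 1)]
      rw [aux_fiber τ (fun j => e ∈ s j) (fun k => 1 - (nt e k s : ℝ))]
      rw [← Finset.sum_add_distrib]
      apply Finset.sum_congr rfl
      intro k _
      rw [hnt e k sstar, hnt e k s]
    rw [hGid]
    exact aux_key (univ.image τ) (fun k => nt e k s) (fun k => nt e k sstar)
      (n e s) (n e sstar) hXid hYid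
  -- assemble
  calc ∑ i, (cτ i (Function.update s i (sstar i)) - cτ i s + c i s)
      ≤ ∑ i, ∑ e, α e * G i e := Finset.sum_le_sum fun i _ => step1 i
    _ = ∑ e, ∑ i, α e * G i e := Finset.sum_comm
    _ = ∑ e, α e * ∑ i, G i e := by
        apply Finset.sum_congr rfl
        intro e _
        rw [Finset.mul_sum]
    _ ≤ ∑ e, α e * ((8/3) * (n e sstar : ℝ)^2 + (1/3) * (n e s : ℝ)^2) :=
        Finset.sum_le_sum fun e _ => mul_le_mul_of_nonneg_left (key e) (hα e)
    _ = (8 / 3) * C sstar + (1 / 3) * C s := by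
        rw [hC, hC, Finset.mul_sum, Finset.mul_sum, ← Finset.sum_add_distrib]
        apply Finset.sum_congr rfl
        intro e _
        ring
end

section
/- Every pure tribal Nash equilibrium s of an atomic linear congestion game satisfies C(s) ≤ 4·C(s*) for every strategy profile s*, where C is total cost. -/
/-!
When player `i` deviates to `s*ᵢ`, tribal stability bounds `cᵢ(s)` by the cost `i` would pay after
deviating, at most `∑_{e ∈ s*ᵢ} αₑ (nₑ(s) + 1)`, plus the change of cost inflicted on `i`'s tribe
mates. Summing over players and regrouping by resource and tribe, with `U_g`, `X_g` the numbers of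
members of tribe `g` using `e` in `s` and `s*`, the externalities become
`∑_g U_g (X_g - U_g) ≤ (∑_g X_g)² - ∑_g U_g`, and an integer quadratic inequality yields
`(8/3, 1/3)`-smoothness: `∑ᵢ (cᵢ(s) + cᵢ^τ(s*ᵢ, s₋ᵢ) - cᵢ^τ(s)) ≤ 8/3 C(s*) + 1/3 C(s)`.
At a tribal Nash equilibrium the left side is at least `C(s)`, so `C(s) ≤ (8/3)/(1 - 1/3) C(s*)`.
-/

open Finset

namespace TribalGame

variable {P A T : Type*} [Fintype P] [DecidableEq P] [DecidableEq T]

def tribalCost (c : P → (P → A) → ℝ) (τ : P → T) (i : P) (t : P → A) : ℝ :=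
  ∑ j ∈ {j | τ j = τ i}, c j t

def socialCost (c : P → (P → A) → ℝ) (t : P → A) : ℝ :=
  ∑ i, c i t

def IsTribalNash (c : P → (P → A) → ℝ) (τ : P → T) (S : P → Set A) (s : P → A) : Prop :=
  ∀ i a, a ∈ S i → tribalCost c τ i s ≤ tribalCost c τ i (Function.update s i a)

def IsTribalSmooth (c : P → (P → A) → ℝ) (τ : P → T) (lam mu : ℝ) : Prop :=
  ∀ s s' : P → A, ∑ i, (c i s + tribalCost c τ i (Function.update s i (s' i)) - tribalCost c τ i s)
    ≤ lam * socialCost c s' + mu * socialCost c s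

theorem socialCost_le_of_isTribalNash {c : P → (P → A) → ℝ} {τ : P → T} {S : P → Set A}
    {s s' : P → A} {lam mu : ℝ} (hnash : IsTribalNash c τ S s) (hs' : ∀ i, s' i ∈ S i)
    (hsmooth : IsTribalSmooth c τ lam mu) (hmu : mu < 1) :
    socialCost c s ≤ lam / (1 - mu) * socialCost c s' := by
  have hle : socialCost c s ≤ lam * socialCost c s' + mu * socialCost c s :=
    calc socialCost c s
        ≤ ∑ i, (c i s + tribalCost c τ i (Function.update s i (s' i)) - tribalCost c τ i s) :=
          sum_le_sum fun i _ => by linarith [hnash i (s' i) (hs' i)]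
      _ ≤ _ := hsmooth s s'
  rw [div_mul_eq_mul_div, le_div_iff₀ (by linarith)]
  linarith

end TribalGame

theorem Nat.mul_succ_le_sq_add_sq (u x : ℕ) : u * (x + 1) ≤ x ^ 2 + u ^ 2 := by
  rcases le_or_gt u x with h | h
  · nlinarith [Nat.le_self_pow two_ne_zero u]
  · nlinarith

theorem Nat.three_mul_add_le (m n : ℕ) : 3 * (m * n) + 3 * m ≤ 5 * m ^ 2 + n ^ 2 := by
  rcases Nat.lt_or_ge m 2 with h | h
  · interval_cases m
    · simp
    · rcases Nat.lt_or_ge n 3 with hn | hn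
      · interval_cases n <;> norm_num
      · nlinarith
  · nlinarith [sq_nonneg ((2 * n : ℤ) - 3 * m)]

/-- The per-resource inequality behind `(8/3, 1/3)`-smoothness: `∑ x g` and `∑ u g` are the loads of
a resource under `s'` and `s`, split into the contributions `x g`, `u g` of the tribes `g`. -/
theorem resource_smoothness_ineq {ι : Type*} (G : Finset ι) (u x : ι → ℕ) :
    ((∑ g ∈ G, x g : ℕ) : ℝ) * ((∑ g ∈ G, u g : ℕ) + 1) + (∑ g ∈ G, u g : ℕ)
        + ∑ g ∈ G, (u g : ℝ) * (x g - u g)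
      ≤ 8 / 3 * ((∑ g ∈ G, x g : ℕ) : ℝ) ^ 2 + 1 / 3 * ((∑ g ∈ G, u g : ℕ) : ℝ) ^ 2 := by
  set m := ∑ g ∈ G, x g
  set n := ∑ g ∈ G, u g
  have hterm : ∀ g ∈ G, (u g : ℝ) * (x g - u g) ≤ (x g : ℝ) ^ 2 - u g := fun g _ => by
    have h : (u g : ℝ) * (x g + 1) ≤ (x g : ℝ) ^ 2 + (u g : ℝ) ^ 2 := by
      exact_mod_cast Nat.mul_succ_le_sq_add_sq (u g) (x g)
    linarith
  have hsq : ∑ g ∈ G, (x g : ℝ) ^ 2 ≤ (m : ℝ) ^ 2 := by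
    push_cast [m]
    exact sum_sq_le_sq_sum_of_nonneg fun g _ => Nat.cast_nonneg _
  have hcross : ∑ g ∈ G, (u g : ℝ) * (x g - u g) ≤ (m : ℝ) ^ 2 - n := by
    calc ∑ g ∈ G, (u g : ℝ) * (x g - u g) ≤ ∑ g ∈ G, ((x g : ℝ) ^ 2 - u g) := sum_le_sum hterm
      _ ≤ (m : ℝ) ^ 2 - n := by push_cast [sum_sub_distrib, n]; linarith
  have hquad : 3 * ((m : ℝ) * n) + 3 * m ≤ 5 * (m : ℝ) ^ 2 + (n : ℝ) ^ 2 := by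
    exact_mod_cast Nat.three_mul_add_le m n
  linarith

theorem Finset.sum_sum_mem_eq_sum_card_mul {ι E : Type*} [Fintype E] [DecidableEq E]
    (Q : Finset ι) (t : ι → Finset E) (f : E → ℝ) :
    ∑ j ∈ Q, ∑ e ∈ t j, f e = ∑ e, (#{j ∈ Q | e ∈ t j} : ℝ) * f e := by
  simp_rw [natCast_card_filter, sum_mul, ite_mul, one_mul, zero_mul]
  rw [sum_comm]
  refine sum_congr rfl fun j _ => ?_
  rw [sum_ite_mem, univ_inter]

namespace CongestionGame

open TribalGame

variable {P E T : Type*} [Fintype P] [DecidableEq E] [DecidableEq T]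

def load (e : E) (t : P → Finset E) : ℕ := #{j | e ∈ t j}

def tribeLoad (τ : P → T) (g : T) (e : E) (t : P → Finset E) : ℕ :=
  #{j ∈ {j | τ j = g} | e ∈ t j}

def congestionCost (α : E → ℝ) (i : P) (t : P → Finset E) : ℝ := ∑ e ∈ t i, α e * load e t

theorem sum_tribeLoad (τ : P → T) (e : E) (t : P → Finset E) :
    ∑ g ∈ univ.image τ, tribeLoad τ g e t = load e t := by
  rw [load, card_eq_sum_card_fiberwise fun j _ => mem_image_of_mem τ (mem_univ j)]
  exact sum_congr rfl fun g _ => by rw [tribeLoad, filter_comm]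

section Deviation

variable [DecidableEq P] {α : E → ℝ}

theorem load_update (s : P → Finset E) (i : P) (a : Finset E) (e : E) :
    (load e (Function.update s i a) : ℝ)
      = load e s + (if e ∈ a then 1 else 0) - (if e ∈ s i then 1 else 0) := by
  have hupd : (fun j => if e ∈ Function.update s i a j then (1 : ℝ) else 0)
      = Function.update (fun j => if e ∈ s j then 1 else 0) i (if e ∈ a then 1 else 0) :=
    funext fun j => Function.apply_update (fun _ b => if e ∈ b then (1 : ℝ) else 0) s i a j
  simp only [load, natCast_card_filter, hupd, sum_update_of_mem (mem_univ i)]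
  rw [sum_eq_add_sum_sdiff_singleton_of_mem (mem_univ i)]
  ring

theorem congestionCost_update_self_le (hα : ∀ e, 0 ≤ α e) (s : P → Finset E) (i : P)
    (a : Finset E) :
    congestionCost α i (Function.update s i a) ≤ ∑ e ∈ a, α e * (load e s + 1) := by
  rw [congestionCost, Function.update_self]
  refine sum_le_sum fun e he => mul_le_mul_of_nonneg_left ?_ (hα e)
  rw [load_update, if_pos he]
  split_ifs <;> linarith

theorem congestionCost_update_of_ne (s : P → Finset E) {i j : P} (hji : j ≠ i) (a : Finset E) :
    congestionCost α j (Function.update s i a)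
      = congestionCost α j s
        + ∑ e ∈ s j, α e * ((if e ∈ a then 1 else 0) - (if e ∈ s i then 1 else 0)) := by
  rw [congestionCost, congestionCost, Function.update_of_ne hji, ← sum_add_distrib]
  exact sum_congr rfl fun e _ => by rw [load_update]; ring

/-- The externality sum runs over the whole tribe, `i` included; the term `∑ e ∈ s i, α e` pays
for `i`'s own summand. -/
theorem congestionCost_add_tribalCost_update_sub_le (hα : ∀ e, 0 ≤ α e) (τ : P → T)
    (s : P → Finset E) (i : P) (a : Finset E) :
    congestionCost α i s + tribalCost (congestionCost α) τ i (Function.update s i a)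
        - tribalCost (congestionCost α) τ i s
      ≤ ∑ e ∈ a, α e * (load e s + 1) + ∑ e ∈ s i, α e
        + ∑ j ∈ {j | τ j = τ i}, ∑ e ∈ s j,
            α e * ((if e ∈ a then 1 else 0) - (if e ∈ s i then 1 else 0)) := by
  set Δ : P → ℝ := fun j =>
    ∑ e ∈ s j, α e * ((if e ∈ a then 1 else 0) - (if e ∈ s i then 1 else 0))
  have hi : i ∈ ({j | τ j = τ i} : Finset P) := by simp
  have htribe : tribalCost (congestionCost α) τ i (Function.update s i a)
      = congestionCost α i (Function.update s i a)
        + ∑ j ∈ ({j | τ j = τ i} : Finset P).erase i, (congestionCost α j s + Δ j) := by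
    rw [tribalCost, ← add_sum_erase _ _ hi]
    exact congrArg _ (sum_congr rfl fun j hj =>
      congestionCost_update_of_ne s (ne_of_mem_erase hj) a)
  have hΔi : -Δ i ≤ ∑ e ∈ s i, α e := by
    rw [← sum_neg_distrib]
    refine sum_le_sum fun e he => ?_
    rw [if_pos he]
    split_ifs <;> nlinarith [hα e]
  rw [htribe, tribalCost, ← add_sum_erase _ _ hi, sum_add_distrib,
    ← add_sum_erase _ Δ hi]
  linarith [congestionCost_update_self_le hα s i a]

end Deviation

variable [Fintype E]

theorem socialCost_congestionCost (α : E → ℝ) (t : P → Finset E) :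
    socialCost (congestionCost α) t = ∑ e, α e * (load e t : ℝ) ^ 2 := by
  rw [socialCost]
  simp only [congestionCost]
  rw [sum_sum_mem_eq_sum_card_mul]
  exact sum_congr rfl fun e _ => by rw [load]; ring

theorem sum_tribe_externality (α : E → ℝ) (τ : P → T) (s s' : P → Finset E) :
    ∑ i, ∑ j ∈ {j | τ j = τ i}, ∑ e ∈ s j,
        α e * ((if e ∈ s' i then 1 else 0) - (if e ∈ s i then 1 else 0))
      = ∑ e, α e * ∑ g ∈ univ.image τ,
          (tribeLoad τ g e s : ℝ) * (tribeLoad τ g e s' - tribeLoad τ g e s) := by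
  simp_rw [sum_sum_mem_eq_sum_card_mul]
  rw [sum_comm]
  refine sum_congr rfl fun e _ => ?_
  rw [← sum_fiberwise_of_maps_to fun i _ => mem_image_of_mem τ (mem_univ i), mul_sum]
  refine sum_congr rfl fun g _ => ?_
  have hfiber : ∀ i ∈ ({i | τ i = g} : Finset P),
      (#{j ∈ {j | τ j = τ i} | e ∈ s j} : ℝ)
          * (α e * ((if e ∈ s' i then 1 else 0) - (if e ∈ s i then 1 else 0)))
        = α e * tribeLoad τ g e s * ((if e ∈ s' i then 1 else 0) - (if e ∈ s i then 1 else 0)) :=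
    fun i hi => by rw [(mem_filter.1 hi).2, tribeLoad]; ring
  rw [sum_congr rfl hfiber, ← mul_sum, sum_sub_distrib, tribeLoad, tribeLoad,
    natCast_card_filter, natCast_card_filter]
  ring

theorem isTribalSmooth_congestionCost [DecidableEq P] {α : E → ℝ} (hα : ∀ e, 0 ≤ α e)
    (τ : P → T) :
    IsTribalSmooth (congestionCost α) τ (8 / 3) (1 / 3) := by
  intro s s'
  calc _ ≤ ∑ i, (∑ e ∈ s' i, α e * (load e s + 1) + ∑ e ∈ s i, α e
          + ∑ j ∈ {j | τ j = τ i}, ∑ e ∈ s j,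
              α e * ((if e ∈ s' i then 1 else 0) - (if e ∈ s i then 1 else 0))) :=
        sum_le_sum fun i _ => congestionCost_add_tribalCost_update_sub_le hα τ s i (s' i)
    _ = ∑ e, α e * ((load e s' : ℝ) * (load e s + 1) + load e s
          + ∑ g ∈ univ.image τ,
              (tribeLoad τ g e s : ℝ) * (tribeLoad τ g e s' - tribeLoad τ g e s)) := by
        rw [sum_add_distrib, sum_add_distrib, sum_tribe_externality, sum_sum_mem_eq_sum_card_mul,
          sum_sum_mem_eq_sum_card_mul, ← sum_add_distrib, ← sum_add_distrib]
        exact sum_congr rfl fun e _ => by simp only [load]; ring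
    _ ≤ ∑ e, α e * (8 / 3 * (load e s' : ℝ) ^ 2 + 1 / 3 * (load e s : ℝ) ^ 2) := by
        refine sum_le_sum fun e _ => mul_le_mul_of_nonneg_left ?_ (hα e)
        have := resource_smoothness_ineq (univ.image τ) (tribeLoad τ · e s) (tribeLoad τ · e s')
        simpa only [sum_tribeLoad] using this
    _ = _ := by
        rw [socialCost_congestionCost, socialCost_congestionCost, mul_sum, mul_sum,
          ← sum_add_distrib]
        exact sum_congr rfl fun e _ => by ring

end CongestionGame

open TribalGame CongestionGame

theorem stmt_16_general {P E : Type*} [Fintype P] [Fintype E] [DecidableEq P] [DecidableEq E]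
    (α : E → ℝ) (hα : ∀ e, 0 ≤ α e)
    (τ : P → ℕ)
    -- each player's set of allowed strategies (sets of resources)
    (S : P → Set (Finset E))
    -- congestion counts, player costs, tribal costs, social cost
    (n : E → (P → Finset E) → ℕ)
    (hn : ∀ e t, n e t = (univ.filter (fun j : P => e ∈ t j)).card)
    (c : P → (P → Finset E) → ℝ)
    (hc : ∀ i t, c i t = ∑ e ∈ t i, α e * (n e t : ℝ))
    (cτ : P → (P → Finset E) → ℝ)
    (hcτ : ∀ i t, cτ i t = ∑ j ∈ univ.filter (fun j => τ j = τ i), c j t)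
    (C : (P → Finset E) → ℝ)
    (hC : ∀ t, C t = ∑ i, c i t)
    -- s is a pure tribal Nash equilibrium, s* an arbitrary profile
    (s sstar : P → Finset E)
    (hsstar : ∀ i, sstar i ∈ S i)
    (hnash : ∀ (i : P) (a : Finset E), a ∈ S i → cτ i s ≤ cτ i (Function.update s i a)) :
    C s ≤ 4 * C sstar := by
  obtain rfl : n = load := funext₂ hn
  obtain rfl : c = congestionCost α := funext₂ hc
  obtain rfl : cτ = tribalCost (congestionCost α) τ := funext₂ hcτ
  obtain rfl : C = socialCost (congestionCost α) := funext hC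
  have hpoa := socialCost_le_of_isTribalNash hnash hsstar (isTribalSmooth_congestionCost hα τ)
    (by norm_num : (1 / 3 : ℝ) < 1)
  rwa [show (8 / 3 : ℝ) / (1 - 1 / 3) = 4 by norm_num] at hpoa

/-- Every pure tribal Nash equilibrium of an atomic linear congestion game has
total cost at most 4 times that of any strategy profile: C(s) ≤ 4·C(s*). -/
theorem stmt_16 {P E : Type*} [Fintype P] [Fintype E] [DecidableEq P] [DecidableEq E]
    (α : E → ℝ) (hα : ∀ e, 0 ≤ α e)
    (τ : P → ℕ)
    -- each player's set of allowed strategies (sets of resources)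
    (S : P → Set (Finset E))
    -- congestion counts, player costs, tribal costs, social cost
    (n : E → (P → Finset E) → ℕ)
    (hn : ∀ e t, n e t = (univ.filter (fun j : P => e ∈ t j)).card)
    (c : P → (P → Finset E) → ℝ)
    (hc : ∀ i t, c i t = ∑ e ∈ t i, α e * (n e t : ℝ))
    (cτ : P → (P → Finset E) → ℝ)
    (hcτ : ∀ i t, cτ i t = ∑ j ∈ univ.filter (fun j => τ j = τ i), c j t)
    (C : (P → Finset E) → ℝ)
    (hC : ∀ t, C t = ∑ i, c i t)
    -- s is a pure tribal Nash equilibrium, s* an arbitrary profile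
    (s sstar : P → Finset E)
    (hs : ∀ i, s i ∈ S i) (hsstar : ∀ i, sstar i ∈ S i)
    (hnash : ∀ (i : P) (a : Finset E), a ∈ S i → cτ i s ≤ cτ i (Function.update s i a)) :
    C s ≤ 4 * C sstar :=
  stmt_16_general α hα τ S n hn c hc cτ hcτ C hC s sstar hsstar hnash
end

section
/- In the coordinated (oligopolistic) social 2-grouping game, every oligopolistic Nash equilibrium s satisfies 2·U(s) ≥ Σ_i Σ_j u_{ji}, i.e., the coordinated Price of Tribalism of the 2-grouping game is at most 2. -/
open Finset

/-- Coordinated (oligopolistic) PoT upper bound of 2 for the social 2-grouping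
game: every oligopolistic Nash equilibrium s satisfies 2·U(s) ≥ Σ_i Σ_j u_{ji}. -/
theorem stmt_18 {P : Type*} [Fintype P] [DecidableEq P]
    (u : P → P → ℝ) (hu : ∀ i j, 0 ≤ u i j) (hdiag : ∀ i, u i i = 0)
    (τ : P → ℕ) (s : P → Bool)
    (ui : (P → Bool) → P → ℝ)
    (hui : ∀ t i, ui t i = ∑ j ∈ univ.filter (fun j => t j = t i), u j i)
    -- oligopolistic Nash: no tribe can increase its total utility by jointly
    -- reassigning the cliques of all its members
    (hnash : ∀ (t : ℕ) (s' : P → Bool), (∀ j, τ j ≠ t → s' j = s j) →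
      ∑ i ∈ univ.filter (fun i => τ i = t), ui s' i ≤
        ∑ i ∈ univ.filter (fun i => τ i = t), ui s i) :
    2 * (∑ i, ui s i) ≥ ∑ i, ∑ j, u j i := by
  classical
  have key : ∀ t : ℕ, ∑ i ∈ univ.filter (fun i => τ i = t), (∑ j, u j i)
      ≤ 2 * ∑ i ∈ univ.filter (fun i => τ i = t), ui s i := by
    intro t
    have e : ∀ b : Bool, ∀ i ∈ univ.filter (fun i => τ i = t),
        ui (fun j => if τ j = t then b else s j) i
          = ∑ j ∈ univ.filter (fun j => τ j = t ∨ s j = b), u j i := by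
      intro b i hi
      simp only [mem_filter] at hi
      rw [hui]
      congr 1
      ext j
      by_cases hj : τ j = t <;> simp [hj, hi.2]
    have h1 := hnash t (fun j => if τ j = t then true else s j)
      (by intro j hj; simp [hj])
    have h2 := hnash t (fun j => if τ j = t then false else s j)
      (by intro j hj; simp [hj])
    rw [Finset.sum_congr rfl (e true)] at h1
    rw [Finset.sum_congr rfl (e false)] at h2
    have hsplit : ∀ i : P, (∑ j, u j i)
        ≤ (∑ j ∈ univ.filter (fun j => τ j = t ∨ s j = true), u j i)
          + (∑ j ∈ univ.filter (fun j => τ j = t ∨ s j = false), u j i) := by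
      intro i
      rw [← Finset.sum_filter_add_sum_filter_not univ (fun j => s j = true) (fun j => u j i)]
      refine add_le_add ?_ ?_ <;>
        refine Finset.sum_le_sum_of_subset_of_nonneg ?_ (fun j _ _ => hu j i)
      · intro j hj
        simp only [mem_filter] at hj ⊢
        exact ⟨hj.1, Or.inr hj.2⟩
      · intro j hj
        simp only [mem_filter] at hj ⊢
        refine ⟨hj.1, Or.inr ?_⟩
        simpa using hj.2
    calc ∑ i ∈ univ.filter (fun i => τ i = t), (∑ j, u j i)
        ≤ ∑ i ∈ univ.filter (fun i => τ i = t),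
            ((∑ j ∈ univ.filter (fun j => τ j = t ∨ s j = true), u j i)
              + (∑ j ∈ univ.filter (fun j => τ j = t ∨ s j = false), u j i)) :=
          Finset.sum_le_sum (fun i _ => hsplit i)
      _ = (∑ i ∈ univ.filter (fun i => τ i = t),
            ∑ j ∈ univ.filter (fun j => τ j = t ∨ s j = true), u j i)
          + ∑ i ∈ univ.filter (fun i => τ i = t),
            ∑ j ∈ univ.filter (fun j => τ j = t ∨ s j = false), u j i :=
          Finset.sum_add_distrib
      _ ≤ (∑ i ∈ univ.filter (fun i => τ i = t), ui s i)
          + ∑ i ∈ univ.filter (fun i => τ i = t), ui s i := add_le_add h1 h2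
      _ = 2 * ∑ i ∈ univ.filter (fun i => τ i = t), ui s i := by ring
  have hfib1 : ∑ t ∈ univ.image τ, ∑ i ∈ univ.filter (fun i => τ i = t), (∑ j, u j i)
      = ∑ i, ∑ j, u j i :=
    Finset.sum_fiberwise_of_maps_to (fun x _ => Finset.mem_image_of_mem τ (mem_univ x)) _
  have hfib2 : ∑ t ∈ univ.image τ, ∑ i ∈ univ.filter (fun i => τ i = t), ui s i
      = ∑ i, ui s i :=
    Finset.sum_fiberwise_of_maps_to (fun x _ => Finset.mem_image_of_mem τ (mem_univ x)) _
  calc ∑ i, ∑ j, u j i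
      = ∑ t ∈ univ.image τ, ∑ i ∈ univ.filter (fun i => τ i = t), (∑ j, u j i) := hfib1.symm
    _ ≤ ∑ t ∈ univ.image τ, 2 * ∑ i ∈ univ.filter (fun i => τ i = t), ui s i :=
        Finset.sum_le_sum (fun t _ => key t)
    _ = 2 * ∑ t ∈ univ.image τ, ∑ i ∈ univ.filter (fun i => τ i = t), ui s i :=
        (Finset.mul_sum _ _ _).symm
    _ = 2 * ∑ i, ui s i := by rw [hfib2]
end

section
/- Coordinated PoT lower bound of 2 for the 2-grouping game: in the 4-player cycle a,b,c,d with all adjacent symmetric weights equal to 1 (u_{ab}=u_{ba}=u_{bc}=u_{cb}=u_{cd}=u_{dc}=u_{da}=u_{ad}=1, others 0), tribes {a,c} and {b,d}, the profile with cliques {a,d} and {b,c} is an oligopolistic Nash equilibrium with social welfare 4, while the all-in-one-clique optimum has welfare 8. -/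
open Finset

/-!
Every player's two neighbours on the cycle belong to the other tribe, and in the profile
`{a,d}, {b,c}` they sit in different cliques. A tribe's joint deviation leaves the other tribe's
cliques fixed, so each of its members still shares a clique with exactly one neighbour,
whatever it does: every player's utility stays `1`, no tribe can gain, and the welfare is `4`.
In the grand coalition everybody has both neighbours, so the welfare is `8`.
-/

def cliqueUtility {ι α : Type*} [Fintype ι] [DecidableEq α] (w : ι → ι → ℝ) (t : ι → α)
    (i : ι) : ℝ :=
  ∑ j ∈ univ.filter (fun j => t j = t i), w j i

def cycleWeights : Fin 4 → Fin 4 → ℝ :=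
  ![![0, 1, 0, 1], ![1, 0, 1, 0], ![0, 1, 0, 1], ![1, 0, 1, 0]]

def cycleTribe : Fin 4 → ℕ := ![0, 1, 0, 1]

def splitProfile : Fin 4 → Bool := ![false, true, true, false]

section Cycle

variable {α : Type*} [DecidableEq α]

theorem cliqueUtility_cycleWeights (t : Fin 4 → α) (i : Fin 4) :
    cliqueUtility cycleWeights t i =
      (if t (i + 1) = t i then 1 else 0) + (if t (i - 1) = t i then 1 else 0) := by
  have neg_one : (-1 : Fin 4) = 3 := rfl
  fin_cases i <;>
    simp [cliqueUtility, cycleWeights, sum_filter, Fin.sum_univ_four, neg_one] <;> ring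

theorem cliqueUtility_cycleWeights_of_ne (t : Fin 4 → Bool) {i : Fin 4}
    (h : t (i + 1) ≠ t (i - 1)) : cliqueUtility cycleWeights t i = 1 := by
  rw [cliqueUtility_cycleWeights]
  revert h
  cases t (i + 1) <;> cases t (i - 1) <;> cases t i <;> simp

theorem cliqueUtility_cycleWeights_const (c : α) (i : Fin 4) :
    cliqueUtility cycleWeights (fun _ => c) i = 2 := by
  rw [cliqueUtility_cycleWeights]
  norm_num

end Cycle

theorem cycleTribe_add_one_ne (i : Fin 4) : cycleTribe (i + 1) ≠ cycleTribe i := by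
  fin_cases i <;> decide

theorem cycleTribe_sub_one_ne (i : Fin 4) : cycleTribe (i - 1) ≠ cycleTribe i := by
  fin_cases i <;> decide

theorem splitProfile_add_one_ne_sub_one (i : Fin 4) :
    splitProfile (i + 1) ≠ splitProfile (i - 1) := by
  fin_cases i <;> decide

/-- Coordinated PoT lower bound of 2 for the 2-grouping game: 4-cycle a,b,c,d
with unit adjacent weights, tribes {a,c} and {b,d}; the profile with cliques
{a,d} and {b,c} is an oligopolistic Nash equilibrium of welfare 4, while the
all-in-one-clique optimum has welfare 8. -/
theorem stmt_19
    (u : Fin 4 → Fin 4 → ℝ)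
    (hu : u = ![![0, 1, 0, 1], ![1, 0, 1, 0], ![0, 1, 0, 1], ![1, 0, 1, 0]])
    (τ : Fin 4 → ℕ) (hτ : τ = ![0, 1, 0, 1])
    (s : Fin 4 → Bool) (hs : s = ![false, true, true, false])
    (ui : (Fin 4 → Bool) → Fin 4 → ℝ)
    (hui : ∀ t i, ui t i = ∑ j ∈ univ.filter (fun j => t j = t i), u j i) :
    -- oligopolistic Nash: no tribe can increase its total utility by jointly
    -- reassigning the cliques of all its members
    (∀ (t : ℕ) (s' : Fin 4 → Bool), (∀ j, τ j ≠ t → s' j = s j) →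
      ∑ i ∈ univ.filter (fun i => τ i = t), ui s' i ≤
        ∑ i ∈ univ.filter (fun i => τ i = t), ui s i) ∧
    -- welfare of the equilibrium
    (∑ i, ui s i) = 4 ∧
    -- welfare of the all-in-one-clique optimum
    (∑ i, ui (fun _ => false) i) = 8 := by
  obtain rfl : u = cycleWeights := hu
  obtain rfl : τ = cycleTribe := hτ
  obtain rfl : ui = cliqueUtility cycleWeights := funext₂ hui
  obtain rfl : s = splitProfile := hs
  have utility_eq_one : ∀ i, cliqueUtility cycleWeights splitProfile i = 1 :=
    fun i => cliqueUtility_cycleWeights_of_ne _ (splitProfile_add_one_ne_sub_one i)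
  refine ⟨fun t s' hs' => le_of_eq (sum_congr rfl fun i hi => ?_), ?_, ?_⟩
  · rw [mem_filter] at hi
    have h_next := hs' (i + 1) (hi.2 ▸ cycleTribe_add_one_ne i)
    have h_prev := hs' (i - 1) (hi.2 ▸ cycleTribe_sub_one_ne i)
    rw [utility_eq_one]
    apply cliqueUtility_cycleWeights_of_ne
    rw [h_next, h_prev]
    exact splitProfile_add_one_ne_sub_one i
  · simp only [utility_eq_one, sum_const, card_univ, Fintype.card_fin]
    norm_num
  · simp only [cliqueUtility_cycleWeights_const, sum_const, card_univ, Fintype.card_fin]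
    norm_num
end
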